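/- Let u ∈ Int P and set z̄_i(u) = T^{ℓ_i(u)} y_1^{v_{i,1}} ⋯ y_n^{v_{i,n}} ∈ Λ^ℂ[y_1^{±1}, …, y_n^{±1}]. Then the assignment z_i ↦ z̄_i(u) induces a well-defined ring isomorphism Λ^ℂ[z_1, …, z_m]/SR_ω(X) → Λ^ℂ[y_1^{±1}, …, y_n^{±1}]. -/

import Mathlib

noncomputable section

open scoped Classical Pointwise

/-- Auxiliary: the sum of two subsets of `ℝ` each of which meets every interval `(-∞, C]`
in a finite set again has this property. -/
theorem add_inter_Iic_finite {A B : Set ℝ}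
    (hA : ∀ C : ℝ, (A ∩ Set.Iic C).Finite) (hB : ∀ C : ℝ, (B ∩ Set.Iic C).Finite) :
    ∀ C : ℝ, ((A + B) ∩ Set.Iic C).Finite := by
  intro C
  rcases Set.eq_empty_or_nonempty A with hAe | ⟨a₀, ha₀⟩
  · simp [hAe]
  rcases Set.eq_empty_or_nonempty B with hBe | ⟨b₀, hb₀⟩
  · simp [hBe]
  obtain ⟨a₁, ha₁A, ha₁⟩ : ∃ a₁ ∈ A, ∀ a ∈ A, a₁ ≤ a := by
    obtain ⟨a₁, h₁, h₂⟩ := Set.exists_min_image _ id (hA a₀) ⟨a₀, ha₀, Set.self_mem_Iic⟩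
    refine ⟨a₁, h₁.1, fun a ha => ?_⟩
    by_cases hle : a ≤ a₀
    · exact h₂ a ⟨ha, hle⟩
    · exact le_trans (h₂ a₀ ⟨ha₀, Set.self_mem_Iic⟩) (le_of_not_ge hle)
  obtain ⟨b₁, hb₁B, hb₁⟩ : ∃ b₁ ∈ B, ∀ b ∈ B, b₁ ≤ b := by
    obtain ⟨b₁, h₁, h₂⟩ := Set.exists_min_image _ id (hB b₀) ⟨b₀, hb₀, Set.self_mem_Iic⟩
    refine ⟨b₁, h₁.1, fun b hb => ?_⟩
    by_cases hle : b ≤ b₀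
    · exact h₂ b ⟨hb, hle⟩
    · exact le_trans (h₂ b₀ ⟨hb₀, Set.self_mem_Iic⟩) (le_of_not_ge hle)
  have hsub : (A + B) ∩ Set.Iic C ⊆
      (fun p : ℝ × ℝ => p.1 + p.2) '' ((A ∩ Set.Iic (C - b₁)) ×ˢ (B ∩ Set.Iic (C - a₁))) := by
    rintro r ⟨hr, hrC⟩
    rw [Set.mem_add] at hr
    obtain ⟨a, ha, b, hb, rfl⟩ := hr
    have hC : a + b ≤ C := hrC
    exact ⟨(a, b), ⟨⟨ha, by have := hb₁ b hb; simp only [Set.mem_Iic]; linarith⟩,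
      ⟨hb, by have := ha₁ a ha; simp only [Set.mem_Iic]; linarith⟩⟩, rfl⟩
  exact Set.Finite.subset (Set.Finite.image _ (Set.Finite.prod (hA _) (hB _))) hsub

variable (F : Type*) [Field F]

/-- The universal Novikov field `Λ^F`: the subring of Hahn series over `ℝ` with coefficients
in `F` whose support meets every interval `(-∞, C]` in a finite set.  (Formal sums
`Σ aᵢ T^{λᵢ}` with `λᵢ → ∞`.) -/
def Novikov : Subring (HahnSeries ℝ F) where
  carrier := {s | ∀ C : ℝ, (s.support ∩ Set.Iic C).Finite}
  zero_mem' := by intro C; simp [HahnSeries.support_zero]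
  one_mem' := by
    intro C
    refine Set.Finite.subset (Set.finite_singleton (0 : ℝ)) ?_
    intro r hr
    have h1 : (1 : HahnSeries ℝ F).coeff r ≠ 0 := hr.1
    rw [HahnSeries.coeff_one] at h1
    by_contra hne
    simp only [Set.mem_singleton_iff] at hne
    simp [hne] at h1
  add_mem' := by
    intro a b ha hb C
    refine Set.Finite.subset ((ha C).union (hb C)) ?_
    intro r hr
    rcases HahnSeries.support_add_subset _ _ hr.1 with h | h
    · exact Or.inl ⟨h, hr.2⟩
    · exact Or.inr ⟨h, hr.2⟩
  neg_mem' := by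
    intro a ha C
    refine Set.Finite.subset (ha C) ?_
    intro r hr
    rw [HahnSeries.support_neg] at hr
    exact hr
  mul_mem' := by
    intro a b ha hb C
    refine Set.Finite.subset (add_inter_Iic_finite ha hb C) ?_
    intro r hr
    exact ⟨HahnSeries.support_mul_subset hr.1, hr.2⟩

/-- The element `T^c` of the universal Novikov field. -/
def NovikovT (c : ℝ) : Novikov F :=
  ⟨HahnSeries.single c 1, by
    intro C
    refine Set.Finite.subset (Set.finite_singleton c) ?_
    intro r hr
    exact HahnSeries.support_single_subset hr.1⟩

/-- The constant element `c·T^0` of the universal Novikov field. -/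
def NovikovC (c : F) : Novikov F :=
  ⟨HahnSeries.single (0 : ℝ) c, by
    intro C
    refine Set.Finite.subset (Set.finite_singleton (0 : ℝ)) ?_
    intro r hr
    exact HahnSeries.support_single_subset hr.1⟩

variable {F}

/-- Membership in `Λ₀^F ⊆ Λ^F`: all exponents are `≥ 0`. -/
def MemLambda0 (x : Novikov F) : Prop :=
  ∀ r : ℝ, r < 0 → (x : HahnSeries ℝ F).coeff r = 0

/-- Membership in `Λ₊^F ⊆ Λ₀^F`: all exponents are `> 0`. -/
def MemLambdaPlus (x : Novikov F) : Prop :=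
  ∀ r : ℝ, r ≤ 0 → (x : HahnSeries ℝ F).coeff r = 0


/-- The affine functions `ℓᵢ(u) = ⟨u, vᵢ⟩ - λᵢ` attached to a moment polytope. -/
def ell (n m : ℕ) (v : Fin m → Fin n → ℤ) (lam : Fin m → ℝ) (i : Fin m) (u : Fin n → ℝ) : ℝ :=
  (∑ j, u j * (v i j : ℝ)) - lam i

/-- The polytope `P = {u | ℓᵢ(u) ≥ 0 for all i}`. -/
def moment (n m : ℕ) (v : Fin m → Fin n → ℤ) (lam : Fin m → ℝ) : Set (Fin n → ℝ) :=
  {u | ∀ i, 0 ≤ ell n m v lam i u}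


/-- The facet `∂ᵢP = {u ∈ P | ℓᵢ(u) = 0}`. -/
def facet (n m : ℕ) (v : Fin m → Fin n → ℤ) (lam : Fin m → ℝ) (i : Fin m) :
    Set (Fin n → ℝ) :=
  {u ∈ moment n m v lam | ell n m v lam i u = 0}

/-- A subset `S ⊆ {1, …, m}` spans a cone of the normal fan iff `⋂_{i ∈ S} ∂ᵢP ≠ ∅`. -/
def SpansCone (n m : ℕ) (v : Fin m → Fin n → ℤ) (lam : Fin m → ℝ)
    (Sc : Finset (Fin m)) : Prop :=
  (⋂ i ∈ Sc, facet n m v lam i).Nonempty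

/-- A primitive collection: a subset which does not span a cone of the normal fan while
every proper subset does. -/
def IsPrimitiveCollection (n m : ℕ) (v : Fin m → Fin n → ℤ) (lam : Fin m → ℝ)
    (Pc : Finset (Fin m)) : Prop :=
  ¬ SpansCone n m v lam Pc ∧ ∀ Sc ⊂ Pc, SpansCone n m v lam Sc

/-- `P` is a (compact) Delzant polytope: every facet has dimension `n - 1`, and at every
vertex exactly `n` facets meet, whose normal vectors form a `ℤ`-basis of `ℤⁿ`. -/
def IsDelzant (n m : ℕ) (v : Fin m → Fin n → ℤ) (lam : Fin m → ℝ) : Prop :=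
  IsCompact (moment n m v lam) ∧ (interior (moment n m v lam)).Nonempty ∧
  (∀ i, Module.finrank ℝ (affineSpan ℝ (facet n m v lam i)).direction = n - 1) ∧
  ∀ u ∈ Set.extremePoints ℝ (moment n m v lam),
    ∃ σ : Fin n → Fin m, Function.Injective σ ∧
      {i | ell n m v lam i u = 0} = Set.range σ ∧
      IsUnit (Matrix.det (Matrix.of fun a b : Fin n => v (σ a) b))

/-- The universal Novikov field over `ℂ`, as a type. -/
def Lam : Type := ↥(Novikov ℂ)

instance : CommRing Lam := inferInstanceAs (CommRing ↥(Novikov ℂ))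

/-- The element `T^c` of `Λ^ℂ`. -/
def TPow (c : ℝ) : Lam := NovikovT ℂ c

/-- The generators `z(𝒫) = Π_{i∈𝒫} zᵢ - T^{ω(𝒫)} Π_{i'∈𝒫'} z_{i'}^{k_{i'}}` of the quantum
Stanley–Reisner ideal.  Here `ω(𝒫) = Σ_{i∈𝒫} ℓᵢ(u) - Σ_{i'∈𝒫'} k_{i'} ℓ_{i'}(u)`, which is
independent of `u` and equals `Σ_{i'∈𝒫'} k_{i'} λ_{i'} - Σ_{i∈𝒫} λᵢ`. -/
def SRgens (n m : ℕ) (v : Fin m → Fin n → ℤ) (lam : Fin m → ℝ) :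
    Set (MvPolynomial (Fin m) Lam) :=
  {q | ∃ (Pc Pc' : Finset (Fin m)) (k : Fin m → ℕ),
    IsPrimitiveCollection n m v lam Pc ∧ SpansCone n m v lam Pc' ∧
    (∀ i ∈ Pc', 0 < k i) ∧
    (∀ j, (∑ i ∈ Pc, v i j) = ∑ i ∈ Pc', (k i : ℤ) * v i j) ∧
    q = (∏ i ∈ Pc, MvPolynomial.X i) -
        MvPolynomial.C (TPow ((∑ i ∈ Pc', (k i : ℝ) * lam i) - ∑ i ∈ Pc, lam i)) *
          ∏ i ∈ Pc', MvPolynomial.X i ^ k i}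

/-- The quantum Stanley–Reisner ideal `SR_ω(X)`. -/
def SRideal (n m : ℕ) (v : Fin m → Fin n → ℤ) (lam : Fin m → ℝ) :
    Ideal (MvPolynomial (Fin m) Lam) :=
  Ideal.span (SRgens n m v lam)

/-- The linear relation ideal `P(X)`, generated by `Σᵢ v_{i,j} zᵢ` for `j = 1, …, n`. -/
def linearRelIdeal (n m : ℕ) (v : Fin m → Fin n → ℤ) :
    Ideal (MvPolynomial (Fin m) Lam) :=
  Ideal.span {q | ∃ j : Fin n, q = ∑ i, MvPolynomial.C ((v i j : ℤ) : Lam) * MvPolynomial.X i}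

/-- `(𝔶, u) ∈ Crit(𝔓𝔒₀)`: each coordinate `𝔶ⱼ` is a (unit) element of `Λ₀ ∖ Λ₊` and all
partial derivatives `∂𝔓𝔒₀^u/∂y_k = Σᵢ v_{i,k} T^{ℓᵢ(u)} y^{vᵢ - e_k}` of the leading order
potential function `𝔓𝔒₀^u = Σᵢ T^{ℓᵢ(u)} y^{vᵢ}` vanish at `𝔶`. -/
def IsCriticalPoint (n m : ℕ) (v : Fin m → Fin n → ℤ) (lam : Fin m → ℝ)
    (y : Fin n → Lamˣ) (u : Fin n → ℝ) : Prop :=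
  (∀ j, MemLambda0 (y j : Lam) ∧ ¬ MemLambdaPlus (y j : Lam)) ∧
  ∀ k : Fin n, (∑ i : Fin m, ((v i k : ℤ) : Lam) *
    (TPow (ell n m v lam i u) *
      ((∏ j, y j ^ ((v i j) - if j = k then 1 else 0) : Lamˣ) : Lam))) = 0

/-- The Laurent polynomial ring `Λ^ℂ[y₁^{±1}, …, y_n^{±1}]`, i.e. the group algebra of
`ℤⁿ` over the Novikov field. -/
abbrev LaurentPoly (n : ℕ) : Type := AddMonoidAlgebra Lam (Fin n →₀ ℤ)

/-- The exponent vector `vᵢ ∈ ℤⁿ` of the monomial `y^{vᵢ}`. -/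
def expVec (n m : ℕ) (v : Fin m → Fin n → ℤ) (i : Fin m) : Fin n →₀ ℤ :=
  Finsupp.equivFunOnFinite.symm (v i)

/-- The monomial `z̄ᵢ(u) = T^{ℓᵢ(u)} y₁^{v_{i,1}} ⋯ y_n^{v_{i,n}}`. -/
def zbar (n m : ℕ) (v : Fin m → Fin n → ℤ) (lam : Fin m → ℝ) (i : Fin m) (u : Fin n → ℝ) :
    LaurentPoly n :=
  AddMonoidAlgebra.single (expVec n m v i) (TPow (ell n m v lam i u))

/-- The partial derivative `∂𝔓𝔒₀^u/∂y_k = Σᵢ v_{i,k} T^{ℓᵢ(u)} y^{vᵢ - e_k}` of the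
leading order potential function `𝔓𝔒₀^u = Σᵢ T^{ℓᵢ(u)} y^{vᵢ}`. -/
def POderiv (n m : ℕ) (v : Fin m → Fin n → ℤ) (lam : Fin m → ℝ) (u : Fin n → ℝ)
    (k : Fin n) : LaurentPoly n :=
  ∑ i : Fin m, AddMonoidAlgebra.single (expVec n m v i - Finsupp.single k 1)
    (((v i k : ℤ) : Lam) * TPow (ell n m v lam i u))

/-- The ideal of the Jacobian ring: the ideal generated by the partial derivatives of the
leading order potential function.  `Jac(𝔓𝔒₀^u)` is the quotient of the Laurent polynomial
ring by this ideal. -/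
def jacIdeal (n m : ℕ) (v : Fin m → Fin n → ℤ) (lam : Fin m → ℝ) (u : Fin n → ℝ) :
    Ideal (LaurentPoly n) :=
  Ideal.span (Set.range (POderiv n m v lam u))

/-!
Sending `zᵢ` to `z̄ᵢ(u) = T^{ℓᵢ(u)} y^{vᵢ}` maps `z^d` to `T^{Σ dᵢ ℓᵢ(u)} y^{Σ dᵢ vᵢ}`. The two
monomials of a generator `z(𝒫)` have the same `y`-exponent and `T`-exponents differing by exactly
`ω(𝒫)`, so `SR_ω(X)` is killed.

The heart of the matter is that every `a ∈ ℤⁿ` is `Σ kᵢ vᵢ` for a unique `k ∈ ℕᵐ` supported on a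
cone. Take a vertex `u₀` minimising `⟨·, a⟩` on `P`. In the basis of normals of the facets through
`u₀`, `a` has nonnegative coordinates: otherwise moving from `u₀` along a dual basis vector stays
in `P` and decreases `⟨·, a⟩`. And for any cone-supported representation `k` of `a`, `Σ kᵢ ℓᵢ` is
nonnegative on `P`, vanishes somewhere on it and differs from `⟨·, a⟩` by a constant, so it
vanishes at `u₀` and `k` lives on the facets through `u₀`. Thus the images of the cone monomials are, up to the units `T^c`, the monomial basis
of the Laurent polynomial ring.

Conversely, modulo `SR_ω(X)` every `z^d` is `T^c` times a cone monomial: if `supp d` is not a cone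
it contains a primitive collection `𝒫`, and `z(𝒫)` replaces `z^𝒫` by `T^{ω(𝒫)} z^k`, which lowers
`Σ dᵢ ℓᵢ(u₁)` (for a fixed `u₁ ∈ P`) by `ω(𝒫) > 0`. So the cone monomials span the quotient, and
they are sent to a basis.
-/

open Filter Topology Matrix

theorem TPow_add (a b : ℝ) : TPow (a + b) = TPow a * TPow b := by
  apply Subtype.ext
  change HahnSeries.single (a + b) (1 : ℂ) = HahnSeries.single a 1 * HahnSeries.single b 1
  rw [HahnSeries.single_mul_single, one_mul]

theorem TPow_zero : TPow 0 = 1 :=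
  Subtype.ext HahnSeries.single_zero_one

theorem isUnit_TPow (c : ℝ) : IsUnit (TPow c) :=
  IsUnit.of_mul_eq_one (TPow (-c)) (by rw [← TPow_add, add_neg_cancel, TPow_zero])

theorem TPow_nsmul (k : ℕ) (x : ℝ) : TPow (k • x) = TPow x ^ k := by
  induction k with
  | zero => rw [zero_smul, TPow_zero, pow_zero]
  | succ k ih => rw [succ_nsmul, TPow_add, ih, pow_succ]

theorem prod_TPow {ι : Type*} (s : Finset ι) (f : ι → ℝ) :
    ∏ i ∈ s, TPow (f i) = TPow (∑ i ∈ s, f i) := by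
  induction s using Finset.cons_induction with
  | empty => rw [Finset.prod_empty, Finset.sum_empty, TPow_zero]
  | cons i s hi ih => rw [Finset.prod_cons, Finset.sum_cons, ih, TPow_add]

theorem Finsupp.linearCombination_indicator {α R M : Type*} [Semiring R] [AddCommMonoid M]
    [Module R M] (g : α → M) (s : Finset α) (f : α → R) :
    Finsupp.linearCombination R g (Finsupp.indicator s fun i _ => f i) = ∑ i ∈ s, f i • g i := by
  simp [Finsupp.indicator_eq_sum_single, map_sum]

theorem IsCompact.exists_mem_extremePoints_isMinOn {E : Type*} [AddCommGroup E] [Module ℝ E]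
    [TopologicalSpace E] [T2Space E] [IsTopologicalAddGroup E] [ContinuousSMul ℝ E]
    [LocallyConvexSpace ℝ E] {s : Set E} (hs : IsCompact s) (hne : s.Nonempty)
    (l : StrongDual ℝ E) : ∃ x ∈ s.extremePoints ℝ, IsMinOn l s x := by
  have hF : IsExposed ℝ s ((-l).toExposed s) := ContinuousLinearMap.toExposed.isExposed
  obtain ⟨x₀, hx₀, hmin⟩ := hs.exists_isMinOn hne l.continuous.continuousOn
  obtain ⟨x, hx⟩ := (hF.isCompact hs).extremePoints_nonempty
    ⟨x₀, hx₀, fun y hy => by simpa using hmin hy⟩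
  exact ⟨x, hF.isExtreme.extremePoints_subset_extremePoints hx,
    fun y hy => by simpa using hx.1.2 y hy⟩

theorem forall_of_descent {α : Type*} {p : α → Prop} (f : α → ℝ) (hf : ∀ x, 0 ≤ f x) {δ : ℝ}
    (hδ : 0 < δ) (step : ∀ x, ¬ p x → ∃ y, f y ≤ f x - δ ∧ (p y → p x)) : ∀ x, p x := by
  suffices h : ∀ N : ℕ, ∀ x, f x ≤ N * δ → p x from
    fun x => h _ x (by rw [← div_le_iff₀ hδ]; exact Nat.le_ceil _)
  intro N
  induction N with
  | zero =>
    intro x hx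
    by_contra hpx
    obtain ⟨y, hy, -⟩ := step x hpx
    push_cast at hx
    linarith [hf y]
  | succ N ih =>
    intro x hx
    by_contra hpx
    obtain ⟨y, hy, hyx⟩ := step x hpx
    exact hpx (hyx (ih y (by push_cast at hx; linarith)))

theorem exists_pos_forall_le_of_finite {α : Type*} [Finite α] {p : α → Prop} {f : α → ℝ}
    (hf : ∀ x, p x → 0 < f x) : ∃ δ > 0, ∀ x, p x → δ ≤ f x := by
  have h : ∀ᶠ δ in 𝓝[>] (0 : ℝ), ∀ x, p x → δ ≤ f x := by
    refine Filter.eventually_all.2 fun x => ?_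
    by_cases hx : p x
    · filter_upwards [nhdsWithin_le_nhds (eventually_le_nhds (hf x hx))] with δ h _ using h
    · exact Eventually.of_forall fun _ h => absurd h hx
  obtain ⟨δ, hδ, hδ0⟩ := (h.and self_mem_nhdsWithin).exists
  exact ⟨δ, hδ0, hδ⟩

theorem Ideal.Quotient.mk_C_mul {σ R : Type*} [CommRing R] (I : Ideal (MvPolynomial σ R))
    (r : R) (p : MvPolynomial σ R) :
    Ideal.Quotient.mk I (MvPolynomial.C r * p) = r • Ideal.Quotient.mk I p := by
  rw [← MvPolynomial.smul_eq_C_mul, ← Ideal.Quotient.mkₐ_eq_mk R, map_smul]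

theorem LinearMap.bijective_of_span_eq_top_of_apply_eq_basis {ι R M N : Type*} [CommRing R]
    [AddCommGroup M] [Module R M] [AddCommGroup N] [Module R N] (f : M →ₗ[R] N) {s : ι → M}
    (hs : Submodule.span R (Set.range s) = ⊤) (b : Module.Basis ι R N) (hfs : ∀ i, f (s i) = b i) :
    Function.Bijective f := by
  have hli : LinearIndependent R s :=
    LinearIndependent.of_comp f (by simpa [Function.comp_def, hfs] using b.linearIndependent)
  set b₀ := Module.Basis.mk hli hs.ge
  have hf : f = (b₀.equiv b (Equiv.refl ι)).toLinearMap := b₀.ext fun i => by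
    rw [LinearEquiv.coe_coe, Module.Basis.equiv_apply, Module.Basis.mk_apply, hfs, Equiv.refl_apply]
  rw [hf]
  exact (b₀.equiv b (Equiv.refl ι)).bijective

section Polytope

variable {n m : ℕ} {v : Fin m → Fin n → ℤ} {lam : Fin m → ℝ}

theorem ell_add_smul (i : Fin m) (u d : Fin n → ℝ) (t : ℝ) :
    ell n m v lam i (u + t • d) =
      ell n m v lam i u + t * (d ⬝ᵥ fun j => (v i j : ℝ)) := by
  change (u + t • d) ⬝ᵥ _ - _ = u ⬝ᵥ _ - _ + _
  rw [add_dotProduct, smul_dotProduct, smul_eq_mul]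
  ring

theorem eventually_add_smul_mem_moment {u d : Fin n → ℝ} (hu : u ∈ moment n m v lam)
    (hd : ∀ i, ell n m v lam i u = 0 → 0 ≤ d ⬝ᵥ fun j => (v i j : ℝ)) :
    ∀ᶠ t in 𝓝[>] (0 : ℝ), u + t • d ∈ moment n m v lam := by
  change ∀ᶠ t in 𝓝[>] (0 : ℝ), ∀ i, 0 ≤ ell n m v lam i (u + t • d)
  refine Filter.eventually_all.2 fun i => ?_
  simp only [ell_add_smul]
  rcases (hu i).eq_or_lt with h | h
  · filter_upwards [self_mem_nhdsWithin] with t (ht : 0 < t)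
    rw [← h, zero_add]
    exact mul_nonneg ht.le (hd i h.symm)
  · have hlim : Tendsto (fun t : ℝ => ell n m v lam i u + t * (d ⬝ᵥ fun j => (v i j : ℝ)))
        (𝓝 0) (𝓝 (ell n m v lam i u)) := by
      simpa using (Continuous.tendsto (by fun_prop) 0 :
        Tendsto (fun t : ℝ => ell n m v lam i u + t * (d ⬝ᵥ fun j => (v i j : ℝ))) _ _)
    exact nhdsWithin_le_nhds ((hlim.eventually (lt_mem_nhds h)).mono fun _ => le_of_lt)

theorem dotProduct_nonneg_of_isMinOn {a u d : Fin n → ℝ} (hu : u ∈ moment n m v lam)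
    (hmin : IsMinOn (· ⬝ᵥ a) (moment n m v lam) u)
    (hd : ∀ i, ell n m v lam i u = 0 → 0 ≤ d ⬝ᵥ fun j => (v i j : ℝ)) : 0 ≤ d ⬝ᵥ a := by
  obtain ⟨t, ht, ht0⟩ :=
    ((eventually_add_smul_mem_moment hu hd).and self_mem_nhdsWithin).exists
  have hle : u ⬝ᵥ a ≤ (u + t • d) ⬝ᵥ a := hmin ht
  rw [add_dotProduct, smul_dotProduct, smul_eq_mul] at hle
  exact nonneg_of_mul_nonneg_right (by linarith) ht0

theorem exists_vertex_isMinOn (hD : IsDelzant n m v lam) (a : Fin n → ℝ) :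
    ∃ u ∈ (moment n m v lam).extremePoints ℝ, IsMinOn (· ⬝ᵥ a) (moment n m v lam) u := by
  obtain ⟨u, hu, hmin⟩ := hD.1.exists_mem_extremePoints_isMinOn
    (hD.2.1.mono interior_subset) (LinearMap.toContinuousLinearMap (dotProductEquiv ℝ _ a))
  exact ⟨u, hu, fun w hw => by simpa [dotProduct_comm] using hmin hw⟩

theorem spansCone_iff (hne : (moment n m v lam).Nonempty) (S : Finset (Fin m)) :
    SpansCone n m v lam S ↔ ∃ u ∈ moment n m v lam, ∀ i ∈ S, ell n m v lam i u = 0 := by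
  refine ⟨fun ⟨u, hu⟩ => ?_, fun ⟨u, hu, hS⟩ => ⟨u, Set.mem_iInter₂.2 fun i hi => ⟨hu, hS i hi⟩⟩⟩
  rw [Set.mem_iInter₂] at hu
  rcases S.eq_empty_or_nonempty with rfl | ⟨i, hi⟩
  · obtain ⟨w, hw⟩ := hne
    exact ⟨w, hw, by simp⟩
  · exact ⟨u, (hu i hi).1, fun j hj => (hu j hj).2⟩

theorem exists_isPrimitiveCollection_subset {S : Finset (Fin m)} (h : ¬ SpansCone n m v lam S) :
    ∃ Pc ⊆ S, IsPrimitiveCollection n m v lam Pc := by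
  obtain ⟨Pc, hPcS, hmin⟩ := exists_minimal_le_of_wellFoundedLT (¬ SpansCone n m v lam ·) S h
  exact ⟨Pc, hPcS, hmin.1, fun Sc hSc => by_contra fun hSc' => hSc.not_ge (hmin.2 hSc' hSc.le)⟩

def normalSum (n m : ℕ) (v : Fin m → Fin n → ℤ) : (Fin m →₀ ℕ) →ₗ[ℕ] (Fin n →₀ ℤ) :=
  Finsupp.linearCombination ℕ (expVec n m v)

def ellSum (n m : ℕ) (v : Fin m → Fin n → ℤ) (lam : Fin m → ℝ) (u : Fin n → ℝ) :
    (Fin m →₀ ℕ) →ₗ[ℕ] ℝ :=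
  Finsupp.linearCombination ℕ fun i => ell n m v lam i u

theorem normalSum_apply (k : Fin m →₀ ℕ) (j : Fin n) :
    normalSum n m v k j = ∑ i, (k i : ℤ) * v i j := by
  simp [normalSum, Finsupp.linearCombination_apply, Finsupp.sum_fintype, expVec,
    Finsupp.finsetSum_apply]

theorem ellSum_eq (u : Fin n → ℝ) (k : Fin m →₀ ℕ) :
    ellSum n m v lam u k =
      (u ⬝ᵥ fun j => (normalSum n m v k j : ℝ)) - Finsupp.linearCombination ℕ lam k := by
  rw [ellSum, Finsupp.linearCombination_apply, Finsupp.linearCombination_apply,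
    Finsupp.sum_fintype _ _ (by simp), Finsupp.sum_fintype _ _ (by simp)]
  simp only [normalSum_apply, ell, dotProduct, nsmul_eq_mul, mul_sub, Finset.sum_sub_distrib,
    Finset.mul_sum, Int.cast_sum, Int.cast_mul, Int.cast_natCast]
  rw [Finset.sum_comm]
  congr 1
  exact Finset.sum_congr rfl fun _ _ => Finset.sum_congr rfl fun _ _ => by ring

theorem ellSum_sub_ellSum {k k' : Fin m →₀ ℕ} (h : normalSum n m v k = normalSum n m v k')
    (u : Fin n → ℝ) :
    ellSum n m v lam u k - ellSum n m v lam u k' =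
      Finsupp.linearCombination ℕ lam k' - Finsupp.linearCombination ℕ lam k := by
  rw [ellSum_eq, ellSum_eq, h]
  ring

theorem ellSum_nonneg {u : Fin n → ℝ} (hu : u ∈ moment n m v lam) (k : Fin m →₀ ℕ) :
    0 ≤ ellSum n m v lam u k :=
  Finset.sum_nonneg fun i _ => nsmul_nonneg (hu i) _

theorem ellSum_eq_zero_iff {u : Fin n → ℝ} (hu : u ∈ moment n m v lam) (k : Fin m →₀ ℕ) :
    ellSum n m v lam u k = 0 ↔ ∀ i ∈ k.support, ell n m v lam i u = 0 := by
  rw [ellSum, Finsupp.linearCombination_apply, Finsupp.sum,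
    Finset.sum_eq_zero_iff_of_nonneg fun i _ => nsmul_nonneg (hu i) _]
  refine forall₂_congr fun i hi => ?_
  rw [nsmul_eq_mul, mul_eq_zero, Nat.cast_eq_zero, or_iff_right (Finsupp.mem_support_iff.1 hi)]

theorem normalSum_apply_of_support_subset {σ : Fin n → Fin m} (hσ : Function.Injective σ)
    {k : Fin m →₀ ℕ} (hk : ∀ i ∈ k.support, i ∈ Set.range σ) (j : Fin n) :
    normalSum n m v k j = ((fun p => (k (σ p) : ℤ)) ᵥ* Matrix.of fun p q => v (σ p) q) j := by
  rw [normalSum_apply]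
  refine (Fintype.sum_of_injective σ hσ _ _ (fun i hi => ?_) fun p => rfl).symm
  rw [Finsupp.notMem_support_iff.1 fun h => hi (hk i h), Nat.cast_zero, zero_mul]

theorem vecMul_inv_nonneg_of_isMinOn {a : Fin n → ℤ} {u : Fin n → ℝ} {σ : Fin n → Fin m}
    (hu : u ∈ moment n m v lam)
    (hmin : IsMinOn (· ⬝ᵥ fun j => (a j : ℝ)) (moment n m v lam) u)
    (hσ : {i | ell n m v lam i u = 0} = Set.range σ)
    (hdet : IsUnit (Matrix.of fun p q => v (σ p) q).det) (p : Fin n) :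
    0 ≤ (a ᵥ* (Matrix.of fun p q => v (σ p) q)⁻¹) p := by
  set M : Matrix (Fin n) (Fin n) ℤ := Matrix.of fun p q => v (σ p) q
  set Mr := M.map (Int.castRingHom ℝ)
  have hMr : IsUnit Mr.det :=
    (isUnit_iff_isUnit_det _).1 (((isUnit_iff_isUnit_det M).2 hdet).map
      (Int.castRingHom ℝ).mapMatrix)
  set c := a ᵥ* M⁻¹
  have ha : a = c ᵥ* M := by rw [vecMul_vecMul, M.nonsing_inv_mul hdet, vecMul_one]
  -- `d` is the `p`-th vector of the basis dual to the normals at the vertex `u`.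
  set d := Mr⁻¹ *ᵥ Pi.single p 1
  have hd : Mr *ᵥ d = Pi.single p 1 := by
    rw [mulVec_mulVec, Mr.mul_nonsing_inv hMr, one_mulVec]
  have hfeas : ∀ i, ell n m v lam i u = 0 → 0 ≤ d ⬝ᵥ fun j => (v i j : ℝ) := by
    intro i hi
    obtain ⟨p', rfl⟩ : i ∈ Set.range σ := hσ ▸ hi
    have : (d ⬝ᵥ fun j => (v (σ p') j : ℝ)) = (Pi.single p (1 : ℝ) : Fin n → ℝ) p' := by
      rw [← hd, dotProduct_comm]
      rfl
    rw [this]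
    by_cases h : p' = p <;> simp [h]
  have hcast : (fun j => (a j : ℝ)) = (Int.castRingHom ℝ ∘ c) ᵥ* Mr := by
    ext j
    rw [ha, ← RingHom.map_vecMul]
    rfl
  have := dotProduct_nonneg_of_isMinOn hu hmin hfeas
  rw [hcast, dotProduct_comm, ← dotProduct_mulVec, hd, dotProduct_single, mul_one] at this
  exact Int.cast_nonneg_iff.1 this

theorem exists_spansCone_normalSum_eq (hD : IsDelzant n m v lam) (a : Fin n →₀ ℤ) :
    ∃ k : Fin m →₀ ℕ, SpansCone n m v lam k.support ∧ normalSum n m v k = a := by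
  obtain ⟨u, hu, hmin⟩ := exists_vertex_isMinOn hD fun j => (a j : ℝ)
  obtain ⟨σ, hσinj, hσ, hdet⟩ := hD.2.2.2 u hu
  set M : Matrix (Fin n) (Fin n) ℤ := Matrix.of fun p q => v (σ p) q
  set k : Fin m →₀ ℕ :=
    Finsupp.mapDomain σ (Finsupp.equivFunOnFinite.symm fun p => ((a ᵥ* M⁻¹) p).toNat)
  have hk : ∀ i ∈ k.support, i ∈ Set.range σ := fun i hi => by
    obtain ⟨p, -, rfl⟩ := Finset.mem_image.1 (Finsupp.mapDomain_support hi)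
    exact ⟨p, rfl⟩
  refine ⟨k, ⟨u, Set.mem_iInter₂.2 fun i hi => ⟨hu.1, ?_⟩⟩, Finsupp.ext fun j => ?_⟩
  · exact (hσ ▸ hk i hi : i ∈ {i | ell n m v lam i u = 0})
  · have hkσ : (fun p => (k (σ p) : ℤ)) = a ᵥ* M⁻¹ := funext fun p => by
      rw [Finsupp.mapDomain_apply hσinj, Finsupp.coe_equivFunOnFinite_symm,
        Int.toNat_of_nonneg (vecMul_inv_nonneg_of_isMinOn hu.1 hmin hσ hdet p)]
    rw [normalSum_apply_of_support_subset hσinj hk, hkσ, vecMul_vecMul,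
      M.nonsing_inv_mul hdet, vecMul_one]

theorem ell_eq_zero_of_isMinOn {k : Fin m →₀ ℕ} (hk : SpansCone n m v lam k.support)
    {u : Fin n → ℝ} (hu : u ∈ moment n m v lam)
    (hmin : IsMinOn (· ⬝ᵥ fun j => (normalSum n m v k j : ℝ)) (moment n m v lam) u) :
    ∀ i ∈ k.support, ell n m v lam i u = 0 := by
  obtain ⟨w, hw, hwk⟩ := (spansCone_iff ⟨u, hu⟩ _).1 hk
  rw [← ellSum_eq_zero_iff hw] at hwk
  rw [← ellSum_eq_zero_iff hu]
  have hle : (u ⬝ᵥ fun j => (normalSum n m v k j : ℝ)) ≤ w ⬝ᵥ fun j => (normalSum n m v k j : ℝ) :=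
    hmin hw
  refine le_antisymm ?_ (ellSum_nonneg hu k)
  rw [ellSum_eq] at hwk ⊢
  linarith

theorem normalSum_injOn (hD : IsDelzant n m v lam) :
    Set.InjOn (normalSum n m v) {k | SpansCone n m v lam k.support} := by
  intro k hk k' hk' h
  obtain ⟨u, hu, hmin⟩ := exists_vertex_isMinOn hD fun j => (normalSum n m v k j : ℝ)
  obtain ⟨σ, hσinj, hσ, hdet⟩ := hD.2.2.2 u hu
  have hrange : ∀ l : Fin m →₀ ℕ, SpansCone n m v lam l.support →
      normalSum n m v l = normalSum n m v k → ∀ i ∈ l.support, i ∈ Set.range σ :=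
    fun l hl hlk i hi => hσ ▸ ell_eq_zero_of_isMinOn hl hu.1 (hlk ▸ hmin) i hi
  have hk := hrange k hk rfl
  have hk' := hrange k' hk' h.symm
  have hσk : (fun p => (k (σ p) : ℤ)) = fun p => (k' (σ p) : ℤ) :=
    vecMul_injective_of_isUnit ((isUnit_iff_isUnit_det _).2 hdet) <| funext fun j => by
      dsimp only
      rw [← normalSum_apply_of_support_subset hσinj hk,
        ← normalSum_apply_of_support_subset hσinj hk', h]
  ext i
  by_cases hi : i ∈ Set.range σ
  · obtain ⟨p, rfl⟩ := hi
    exact_mod_cast congrFun hσk p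
  · rw [Finsupp.notMem_support_iff.1 fun h => hi (hk i h),
      Finsupp.notMem_support_iff.1 fun h => hi (hk' i h)]

theorem normalSum_indicator (s : Finset (Fin m)) (f : Fin m → ℕ) (j : Fin n) :
    normalSum n m v (Finsupp.indicator s fun i _ => f i) j = ∑ i ∈ s, (f i : ℤ) * v i j := by
  simp [normalSum, Finsupp.linearCombination_indicator, Finsupp.finsetSum_apply, expVec]

end Polytope

section QuantumStanleyReisner

variable {n m : ℕ} {v : Fin m → Fin n → ℤ} {lam : Fin m → ℝ}

-- `z(𝒫)` in exponent notation, `D = 𝒫` and `D' = k`, with `ω(𝒫) = ⟨λ, D'⟩ - ⟨λ, D⟩`.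
def srRelation (lam : Fin m → ℝ) (D D' : Fin m →₀ ℕ) : MvPolynomial (Fin m) Lam :=
  MvPolynomial.monomial D 1 -
    MvPolynomial.C (TPow (Finsupp.linearCombination ℕ lam D' - Finsupp.linearCombination ℕ lam D)) *
      MvPolynomial.monomial D' 1

theorem prod_X_eq_monomial_indicator (s : Finset (Fin m)) :
    ∏ i ∈ s, (MvPolynomial.X i : MvPolynomial (Fin m) Lam) =
      MvPolynomial.monomial (Finsupp.indicator s fun _ _ => 1) 1 := by
  simpa using MvPolynomial.prod_X_pow (R := Lam) (fun _ => 1) s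

theorem exists_eq_srRelation_of_mem_SRgens {q : MvPolynomial (Fin m) Lam}
    (hq : q ∈ SRgens n m v lam) :
    ∃ D D', normalSum n m v D = normalSum n m v D' ∧ q = srRelation lam D D' := by
  obtain ⟨Pc, Pc', k, -, -, -, hrel, rfl⟩ := hq
  refine ⟨Finsupp.indicator Pc fun _ _ => 1, Finsupp.indicator Pc' fun i _ => k i,
    Finsupp.ext fun j => ?_, ?_⟩
  · simpa [normalSum_indicator] using hrel j
  · simp [srRelation, prod_X_eq_monomial_indicator, MvPolynomial.prod_X_pow,
      Finsupp.linearCombination_indicator]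

theorem srRelation_mem_SRgens {Pc : Finset (Fin m)} (hPc : IsPrimitiveCollection n m v lam Pc)
    {k : Fin m →₀ ℕ} (hk : SpansCone n m v lam k.support)
    (h : normalSum n m v k = normalSum n m v (Finsupp.indicator Pc fun _ _ => 1)) :
    srRelation lam (Finsupp.indicator Pc fun _ _ => 1) k ∈ SRgens n m v lam := by
  have hk_ind : k = Finsupp.indicator k.support fun i _ => k i :=
    (Finsupp.eq_indicator_self_iff _).2 subset_rfl
  refine ⟨Pc, k.support, k, hPc, hk, fun i hi => Nat.pos_of_ne_zero (Finsupp.mem_support_iff.1 hi),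
    fun j => ?_, ?_⟩
  · have hj := DFunLike.congr_fun h j
    rw [hk_ind, normalSum_indicator, normalSum_indicator] at hj
    simpa using hj.symm
  · rw [srRelation, Finsupp.linearCombination_indicator, Finsupp.linearCombination_apply,
      prod_X_eq_monomial_indicator, MvPolynomial.prod_X_pow_eq_monomial]
    simp [Finsupp.sum]

def zbarHom (n m : ℕ) (v : Fin m → Fin n → ℤ) (lam : Fin m → ℝ) (u : Fin n → ℝ) :
    MvPolynomial (Fin m) Lam →ₐ[Lam] LaurentPoly n :=
  MvPolynomial.aeval fun i => zbar n m v lam i u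

theorem zbarHom_monomial (u : Fin n → ℝ) (d : Fin m →₀ ℕ) (r : Lam) :
    zbarHom n m v lam u (MvPolynomial.monomial d r) =
      AddMonoidAlgebra.single (normalSum n m v d) (r * TPow (ellSum n m v lam u d)) := by
  simp only [zbarHom, MvPolynomial.aeval_monomial, zbar, AddMonoidAlgebra.single_pow,
    ← TPow_nsmul, AddMonoidAlgebra.finsuppProd_single, AddMonoidAlgebra.coe_algebraMap,
    Function.comp_apply, Algebra.algebraMap_self, RingHom.id_apply,
    AddMonoidAlgebra.single_mul_single, zero_add]
  rw [Finsupp.prod, prod_TPow]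
  rfl

theorem zbarHom_srRelation {D D' : Fin m →₀ ℕ} (h : normalSum n m v D = normalSum n m v D')
    (u : Fin n → ℝ) : zbarHom n m v lam u (srRelation lam D D') = 0 := by
  rw [srRelation, map_sub, map_mul, zbarHom_monomial, zbarHom_monomial, zbarHom,
    MvPolynomial.aeval_C, AddMonoidAlgebra.coe_algebraMap, Function.comp_apply,
    Algebra.algebraMap_self, RingHom.id_apply, AddMonoidAlgebra.single_mul_single, zero_add,
    one_mul, one_mul, ← TPow_add, h, sub_eq_zero]
  congr 2
  linarith [ellSum_sub_ellSum (lam := lam) h u]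

theorem SRideal_le_ker_zbarHom (u : Fin n → ℝ) :
    SRideal n m v lam ≤ RingHom.ker (zbarHom n m v lam u) :=
  Ideal.span_le.2 fun _ hq => by
    obtain ⟨D, D', h, rfl⟩ := exists_eq_srRelation_of_mem_SRgens hq
    exact zbarHom_srRelation h u

theorem mk_monomial_add_eq {D D' : Fin m →₀ ℕ} (h : srRelation lam D D' ∈ SRideal n m v lam)
    (e : Fin m →₀ ℕ) :
    Ideal.Quotient.mk (SRideal n m v lam) (MvPolynomial.monomial (e + D) 1) =
      TPow (Finsupp.linearCombination ℕ lam D' - Finsupp.linearCombination ℕ lam D) •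
        Ideal.Quotient.mk (SRideal n m v lam) (MvPolynomial.monomial (e + D') 1) := by
  rw [← Ideal.Quotient.mk_C_mul, Ideal.Quotient.eq]
  convert Ideal.mul_mem_left _ (MvPolynomial.monomial e 1) h using 1
  rw [srRelation, mul_sub, MvPolynomial.monomial_mul, mul_left_comm, MvPolynomial.monomial_mul,
    one_mul]

theorem linearCombination_lt_of_isPrimitiveCollection (hne : (moment n m v lam).Nonempty)
    {Pc : Finset (Fin m)} (hPc : IsPrimitiveCollection n m v lam Pc)
    {k : Fin m →₀ ℕ} (hk : SpansCone n m v lam k.support)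
    (h : normalSum n m v k = normalSum n m v (Finsupp.indicator Pc fun _ _ => 1)) :
    Finsupp.linearCombination ℕ lam (Finsupp.indicator Pc fun _ _ => 1) <
      Finsupp.linearCombination ℕ lam k := by
  obtain ⟨w, hw, hwk⟩ := (spansCone_iff hne _).1 hk
  rw [← ellSum_eq_zero_iff hw] at hwk
  rw [← sub_pos, ← ellSum_sub_ellSum h.symm w, hwk, sub_zero]
  refine (ellSum_nonneg hw _).lt_of_ne fun h0 => hPc.1 ((spansCone_iff hne Pc).2 ⟨w, hw, ?_⟩)
  rw [eq_comm, ellSum, Finsupp.linearCombination_indicator,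
    Finset.sum_eq_zero_iff_of_nonneg fun i _ => by simpa using hw i] at h0
  simpa using h0

theorem exists_spansCone_mk_monomial_eq (hD : IsDelzant n m v lam) (d : Fin m →₀ ℕ) :
    ∃ g : Fin m →₀ ℕ, SpansCone n m v lam g.support ∧ ∃ c : ℝ,
      Ideal.Quotient.mk (SRideal n m v lam) (MvPolynomial.monomial d 1) =
        TPow c • Ideal.Quotient.mk (SRideal n m v lam) (MvPolynomial.monomial g 1) := by
  obtain ⟨u, hu⟩ : (moment n m v lam).Nonempty := hD.2.1.mono interior_subset
  choose k hk hkPc using fun Pc : Finset (Fin m) =>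
    exists_spansCone_normalSum_eq hD (normalSum n m v (Finsupp.indicator Pc fun _ _ => 1))
  obtain ⟨δ, hδ, hδle⟩ := exists_pos_forall_le_of_finite fun Pc hPc =>
    sub_pos.2 (linearCombination_lt_of_isPrimitiveCollection ⟨u, hu⟩ hPc (hk Pc) (hkPc Pc))
  revert d
  refine forall_of_descent (ellSum n m v lam u) (ellSum_nonneg hu) hδ fun d hd => ?_
  obtain ⟨Pc, hPcd, hPc⟩ := exists_isPrimitiveCollection_subset fun hcone =>
    hd ⟨d, hcone, 0, by rw [TPow_zero, one_smul]⟩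
  have hle : (Finsupp.indicator Pc fun _ _ => 1) ≤ d := fun i => by
    rw [Finsupp.indicator_apply]
    split_ifs with hi
    exacts [Nat.one_le_iff_ne_zero.2 (Finsupp.mem_support_iff.1 (hPcd hi)), Nat.zero_le _]
  obtain ⟨e, rfl⟩ : ∃ e, d = e + Finsupp.indicator Pc fun _ _ => 1 :=
    ⟨_, (tsub_add_cancel_of_le hle).symm⟩
  have hstep := mk_monomial_add_eq
    (Ideal.subset_span (srRelation_mem_SRgens hPc (hk Pc) (hkPc Pc))) e
  refine ⟨e + k Pc, ?_, fun ⟨g, hg, c, hc⟩ =>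
    ⟨g, hg, _, hstep.trans (by rw [hc, smul_smul, ← TPow_add])⟩⟩
  have := ellSum_sub_ellSum (lam := lam) (hkPc Pc).symm u
  rw [map_add, map_add]
  linarith [hδle Pc hPc]

theorem span_mk_monomial_spansCone (hD : IsDelzant n m v lam) :
    Submodule.span Lam (Set.range fun g : {g : Fin m →₀ ℕ // SpansCone n m v lam g.support} =>
      Ideal.Quotient.mk (SRideal n m v lam) (MvPolynomial.monomial g.1 1)) = ⊤ := by
  rw [eq_top_iff]
  rintro x -
  obtain ⟨p, rfl⟩ := Ideal.Quotient.mk_surjective x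
  induction p using MvPolynomial.induction_on' with
  | monomial d r =>
    obtain ⟨g, hg, c, hc⟩ := exists_spansCone_mk_monomial_eq hD d
    rw [← mul_one r, ← MvPolynomial.C_mul_monomial, Ideal.Quotient.mk_C_mul, hc, smul_smul]
    exact Submodule.smul_mem _ _ (Submodule.subset_span ⟨⟨g, hg⟩, rfl⟩)
  | add p q hp hq =>
    rw [map_add]
    exact add_mem hp hq

def normalSumEquiv (hD : IsDelzant n m v lam) :
    {g : Fin m →₀ ℕ // SpansCone n m v lam g.support} ≃ (Fin n →₀ ℤ) :=
  Equiv.ofBijective (fun g => normalSum n m v g.1)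
    ⟨fun g g' h => Subtype.ext (normalSum_injOn hD g.2 g'.2 h), fun a =>
      let ⟨k, hk, hka⟩ := exists_spansCone_normalSum_eq hD a
      ⟨⟨k, hk⟩, hka⟩⟩

def coneBasis (hD : IsDelzant n m v lam) (u : Fin n → ℝ) :
    Module.Basis {g : Fin m →₀ ℕ // SpansCone n m v lam g.support} Lam (LaurentPoly n) :=
  ((AddMonoidAlgebra.basis (Fin n →₀ ℤ) Lam).reindex (normalSumEquiv hD).symm).unitsSMul
    fun g => (isUnit_TPow (ellSum n m v lam u g.1)).unit

theorem coneBasis_apply (hD : IsDelzant n m v lam) (u : Fin n → ℝ)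
    (g : {g : Fin m →₀ ℕ // SpansCone n m v lam g.support}) :
    coneBasis hD u g = zbarHom n m v lam u (MvPolynomial.monomial g.1 1) := by
  rw [coneBasis, Module.Basis.unitsSMul_apply, Module.Basis.reindex_apply, Equiv.symm_symm,
    AddMonoidAlgebra.basis_apply, Units.smul_def, IsUnit.unit_spec,
    AddMonoidAlgebra.smul_single', mul_one, zbarHom_monomial, one_mul]
  rfl

end QuantumStanleyReisner

theorem quotient_by_SR_iso_laurent_general
    (n m : ℕ)
    (v : Fin m → Fin n → ℤ) (lam : Fin m → ℝ)
    (hDelz : IsDelzant n m v lam)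
    (u : Fin n → ℝ) :
    ∃ φ : (MvPolynomial (Fin m) Lam ⧸ SRideal n m v lam) ≃ₐ[Lam] LaurentPoly n,
      ∀ i, φ (Ideal.Quotient.mk (SRideal n m v lam) (MvPolynomial.X i)) =
        zbar n m v lam i u := by
  let φ := Ideal.Quotient.liftₐ (SRideal n m v lam) (zbarHom n m v lam u)
    fun _ hq => SRideal_le_ker_zbarHom u hq
  have hφ : Function.Bijective φ :=
    φ.toLinearMap.bijective_of_span_eq_top_of_apply_eq_basis (span_mk_monomial_spansCone hDelz)
      (coneBasis hDelz u) fun g => (coneBasis_apply hDelz u g).symm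
  exact ⟨AlgEquiv.ofBijective φ hφ, fun i => MvPolynomial.aeval_X _ i⟩

/-- **Statement 14** (Proposition 6.10 of Fukaya–Oh–Ohta–Ono, *Lagrangian Floer theory on
compact toric manifolds I*).  For `u ∈ Int P`, the assignment `zᵢ ↦ z̄ᵢ(u)` induces a
well-defined ring isomorphism `Λ^ℂ[z₁, …, z_m]/SR_ω(X) → Λ^ℂ[y₁^{±1}, …, y_n^{±1}]`. -/
theorem quotient_by_SR_iso_laurent
    (n m : ℕ) (hn : 1 ≤ n) (hm : 1 ≤ m)
    (v : Fin m → Fin n → ℤ) (lam : Fin m → ℝ)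
    (hDelz : IsDelzant n m v lam)
    (u : Fin n → ℝ) (hu : u ∈ interior (moment n m v lam)) :
    ∃ φ : (MvPolynomial (Fin m) Lam ⧸ SRideal n m v lam) ≃ₐ[Lam] LaurentPoly n,
      ∀ i, φ (Ideal.Quotient.mk (SRideal n m v lam) (MvPolynomial.X i)) =
        zbar n m v lam i u :=
  quotient_by_SR_iso_laurent_general n m v lam hDelz u
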